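/- arXiv:1605.01816 — 3 statements merged into one kernel-verified Lean document; each statement's English description precedes it below -/
import Mathlib

section
/- Suppose there exists δ > 0 such that every irreducible graph G = (V,E) with |E| ≥ (3/2 − δ)·|T_G| satisfies τ_t(G) ≤ 2·ν_t(G). Then every irreducible graph G satisfies τ_t(G) ≤ 2·ν_t(G). -/
/-- `t` is (the vertex set of) a triangle of `G`. -/
def IsTriangle {V : Type*} (G : SimpleGraph V) (t : Finset V) : Prop :=
  t.card = 3 ∧ ∀ x ∈ t, ∀ y ∈ t, x ≠ y → G.Adj x y

/-- The set of (three) edges of the triangle with vertex set `t`. -/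
def triEdges {V : Type*} [DecidableEq V] (t : Finset V) : Finset (Sym2 V) :=
  ((t ×ˢ t).filter fun p => p.1 ≠ p.2).image fun p => s(p.1, p.2)

/-- A triangle cover of `G`: a set of edges of `G` intersecting (the edge set of)
every triangle of `G`. -/
def IsTriangleCover {V : Type*} [DecidableEq V] (G : SimpleGraph V)
    (C : Finset (Sym2 V)) : Prop :=
  (∀ e ∈ C, e ∈ G.edgeSet) ∧
    ∀ t : Finset V, IsTriangle G t → ∃ e ∈ triEdges t, e ∈ C

/-- A triangle packing of `G`: a set of pairwise edge-disjoint triangles. -/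
def IsTrianglePacking {V : Type*} [DecidableEq V] (G : SimpleGraph V)
    (P : Finset (Finset V)) : Prop :=
  (∀ t ∈ P, IsTriangle G t) ∧
    ∀ t₁ ∈ P, ∀ t₂ ∈ P, t₁ ≠ t₂ → Disjoint (triEdges t₁) (triEdges t₂)

/-- The triangle covering number τ_t(G). -/
noncomputable def tauT {V : Type*} [DecidableEq V] (G : SimpleGraph V) : ℕ :=
  sInf {n | ∃ C : Finset (Sym2 V), IsTriangleCover G C ∧ C.card = n}

/-- The triangle packing number ν_t(G). -/
noncomputable def nuT {V : Type*} [DecidableEq V] (G : SimpleGraph V) : ℕ :=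
  sSup {n | ∃ P : Finset (Finset V), IsTrianglePacking G P ∧ P.card = n}

/-- The number of triangles of `G`, i.e. |T_G|. -/
noncomputable def numTris {V : Type*} (G : SimpleGraph V) : ℕ :=
  Set.ncard {t : Finset V | IsTriangle G t}

/-- The number of edges of `G`. -/
noncomputable def numEdges {V : Type*} (G : SimpleGraph V) : ℕ :=
  Set.ncard G.edgeSet

/-- `G` is irreducible: every edge lies in some triangle. -/
def Irreducible' {V : Type*} [DecidableEq V] (G : SimpleGraph V) : Prop :=
  ∀ e ∈ G.edgeSet, ∃ t : Finset V, IsTriangle G t ∧ e ∈ triEdges t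

set_option linter.unusedSectionVars false
open Sum Finset

section Aux

variable {α β : Type*} [DecidableEq α] [DecidableEq β]

lemma mem_triEdges {t : Finset α} {e : Sym2 α} :
    e ∈ triEdges t ↔ ∃ x ∈ t, ∃ y ∈ t, x ≠ y ∧ e = s(x, y) := by
  simp only [triEdges, mem_image, mem_filter, Finset.mem_product, Prod.exists]
  constructor
  · rintro ⟨a, b, ⟨⟨ha, hb⟩, hne⟩, rfl⟩; exact ⟨a, ha, b, hb, hne, rfl⟩
  · rintro ⟨a, ha, b, hb, hne, rfl⟩; exact ⟨a, b, ⟨⟨ha, hb⟩, hne⟩, rfl⟩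

lemma triEdges_image (f : α → β) (hf : Function.Injective f) (t : Finset α) :
    triEdges (t.image f) = (triEdges t).image (Sym2.map f) := by
  ext e
  constructor
  · intro he
    obtain ⟨x, hx, y, hy, hne, rfl⟩ := mem_triEdges.1 he
    obtain ⟨a, ha, rfl⟩ := mem_image.1 hx
    obtain ⟨b, hb, rfl⟩ := mem_image.1 hy
    exact mem_image.2 ⟨s(a, b),
      mem_triEdges.2 ⟨a, ha, b, hb, fun hab => hne (by rw [hab]), rfl⟩, rfl⟩
  · intro he
    obtain ⟨e', he', rfl⟩ := mem_image.1 he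
    obtain ⟨a, ha, b, hb, hne, rfl⟩ := mem_triEdges.1 he'
    exact mem_triEdges.2 ⟨f a, mem_image_of_mem f ha, f b, mem_image_of_mem f hb,
      fun hab => hne (hf hab), by simp⟩

def sumGraph (G : SimpleGraph α) (K : SimpleGraph β) : SimpleGraph (α ⊕ β) where
  Adj x y := match x, y with
    | inl a, inl b => G.Adj a b
    | inr a, inr b => K.Adj a b
    | _, _ => False
  symm := ⟨by rintro (a | a) (b | b) h <;> simp_all <;> exact h.symm⟩
  loopless := ⟨by rintro (a | a) h <;> simp_all⟩

variable {G : SimpleGraph α} {K : SimpleGraph β}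

@[simp] lemma sumGraph_inl_inl {a b : α} : (sumGraph G K).Adj (inl a) (inl b) ↔ G.Adj a b :=
  Iff.rfl
@[simp] lemma sumGraph_inr_inr {a b : β} : (sumGraph G K).Adj (inr a) (inr b) ↔ K.Adj a b :=
  Iff.rfl
@[simp] lemma sumGraph_inl_inr {a : α} {b : β} : ¬ (sumGraph G K).Adj (inl a) (inr b) :=
  fun h => h
@[simp] lemma sumGraph_inr_inl {a : β} {b : α} : ¬ (sumGraph G K).Adj (inr a) (inl b) :=
  fun h => h

lemma exists_eq_image_of_range {f : α → β} (hf : Function.Injective f) {t : Finset β}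
    (h : ∀ x ∈ t, ∃ a, x = f a) : ∃ s : Finset α, t = s.image f := by
  classical
  refine ⟨t.preimage f hf.injOn, ?_⟩
  rw [Finset.image_preimage]
  exact (Finset.filter_true_of_mem fun x hx => by
    obtain ⟨a, rfl⟩ := h x hx; exact Set.mem_range_self a).symm

lemma isTriangle_image_inl {s : Finset α} (hs : IsTriangle G s) :
    IsTriangle (sumGraph G K) (s.image inl) := by
  constructor
  · rw [Finset.card_image_of_injective _ inl_injective]; exact hs.1
  · intro x hx y hy hne
    obtain ⟨a, ha, rfl⟩ := mem_image.1 hx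
    obtain ⟨b, hb, rfl⟩ := mem_image.1 hy
    exact hs.2 a ha b hb fun hab => hne (by rw [hab])

lemma isTriangle_image_inr {s : Finset β} (hs : IsTriangle K s) :
    IsTriangle (sumGraph G K) (s.image inr) := by
  constructor
  · rw [Finset.card_image_of_injective _ inr_injective]; exact hs.1
  · intro x hx y hy hne
    obtain ⟨a, ha, rfl⟩ := mem_image.1 hx
    obtain ⟨b, hb, rfl⟩ := mem_image.1 hy
    exact hs.2 a ha b hb fun hab => hne (by rw [hab])

lemma isTriangle_sum_iff {t : Finset (α ⊕ β)} :
    IsTriangle (sumGraph G K) t ↔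
      (∃ s, IsTriangle G s ∧ t = s.image inl) ∨ (∃ s, IsTriangle K s ∧ t = s.image inr) := by
  constructor
  · intro ht
    have hne : t.Nonempty := Finset.card_pos.1 (by rw [ht.1]; norm_num)
    obtain ⟨x₀, hx₀⟩ := hne
    have key : ∀ (P : α ⊕ β → Prop), (∀ a, P (inl a) → ∀ y ∈ t, ∃ c, y = inl c) →
        True := fun _ _ => trivial
    -- case on x₀
    rcases x₀ with a₀ | b₀
    · have hall : ∀ x ∈ t, ∃ a, x = inl a := by
        intro x hx
        by_cases hxe : x = inl a₀
        · exact ⟨a₀, hxe⟩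
        · have hadj := ht.2 (inl a₀) hx₀ x hx (fun he => hxe he.symm)
          rcases x with a | b
          · exact ⟨a, rfl⟩
          · exact absurd hadj sumGraph_inl_inr
      obtain ⟨s, rfl⟩ := exists_eq_image_of_range inl_injective hall
      refine Or.inl ⟨s, ⟨?_, ?_⟩, rfl⟩
      · have := ht.1; rwa [Finset.card_image_of_injective _ inl_injective] at this
      · intro a ha b hb hab
        exact ht.2 (inl a) (mem_image_of_mem _ ha) (inl b) (mem_image_of_mem _ hb)
          (fun he => hab (inl_injective he))
    · have hall : ∀ x ∈ t, ∃ b, x = inr b := by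
        intro x hx
        by_cases hxe : x = inr b₀
        · exact ⟨b₀, hxe⟩
        · have hadj := ht.2 (inr b₀) hx₀ x hx (fun he => hxe he.symm)
          rcases x with a | b
          · exact absurd hadj sumGraph_inr_inl
          · exact ⟨b, rfl⟩
      obtain ⟨s, rfl⟩ := exists_eq_image_of_range inr_injective hall
      refine Or.inr ⟨s, ⟨?_, ?_⟩, rfl⟩
      · have := ht.1; rwa [Finset.card_image_of_injective _ inr_injective] at this
      · intro a ha b hb hab
        exact ht.2 (inr a) (mem_image_of_mem _ ha) (inr b) (mem_image_of_mem _ hb)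
          (fun he => hab (inr_injective he))
  · rintro (⟨s, hs, rfl⟩ | ⟨s, hs, rfl⟩)
    · exact isTriangle_image_inl hs
    · exact isTriangle_image_inr hs

lemma edgeSet_sum :
    (sumGraph G K).edgeSet = Sym2.map inl '' G.edgeSet ∪ Sym2.map inr '' K.edgeSet := by
  apply Set.Subset.antisymm
  · intro e
    refine Sym2.ind (fun x y hadj => ?_) e
    rw [SimpleGraph.mem_edgeSet] at hadj
    rcases x with a | a <;> rcases y with b | b
    · exact Set.mem_union_left _ ⟨s(a, b), hadj, by simp⟩
    · exact absurd hadj sumGraph_inl_inr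
    · exact absurd hadj sumGraph_inr_inl
    · exact Set.mem_union_right _ ⟨s(a, b), hadj, by simp⟩
  · rintro e (⟨e', he', rfl⟩ | ⟨e', he', rfl⟩)
    · induction e' using Sym2.ind with
      | _ a b => simpa using he'
    · induction e' using Sym2.ind with
      | _ a b => simpa using he'

lemma sym2_map_inl_ne_inr (e₁ : Sym2 α) (e₂ : Sym2 β) :
    Sym2.map (inl : α → α ⊕ β) e₁ ≠ Sym2.map (inr : β → α ⊕ β) e₂ := by
  induction e₁ using Sym2.ind with
  | _ a b =>
    induction e₂ using Sym2.ind with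
    | _ c d =>
      intro heq
      simp only [Sym2.map_pair_eq, Sym2.eq_iff] at heq
      rcases heq with ⟨h, -⟩ | ⟨h, -⟩ <;> exact absurd h (by simp)

lemma disjoint_map_inl_inr (S : Set (Sym2 α)) (T : Set (Sym2 β)) :
    Disjoint (Sym2.map (inl : α → α ⊕ β) '' S) (Sym2.map (inr : β → α ⊕ β) '' T) := by
  rw [Set.disjoint_left]
  rintro e ⟨e₁, -, rfl⟩ ⟨e₂, -, heq⟩
  exact sym2_map_inl_ne_inr e₁ e₂ heq.symm

lemma mem_edgeSet_of_map_inl {e : Sym2 α} (he : Sym2.map inl e ∈ (sumGraph G K).edgeSet) :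
    e ∈ G.edgeSet := by
  rw [edgeSet_sum] at he
  rcases he with ⟨e', he', heq⟩ | ⟨e', he', heq⟩
  · rwa [← Sym2.map.injective inl_injective heq]
  · exact absurd heq.symm (sym2_map_inl_ne_inr e e')

lemma mem_edgeSet_of_map_inr {e : Sym2 β} (he : Sym2.map inr e ∈ (sumGraph G K).edgeSet) :
    e ∈ K.edgeSet := by
  rw [edgeSet_sum] at he
  rcases he with ⟨e', he', heq⟩ | ⟨e', he', heq⟩
  · exact absurd heq (sym2_map_inl_ne_inr e' e)
  · rwa [← Sym2.map.injective inr_injective heq]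

lemma numEdges_sum [Fintype α] [Fintype β] :
    numEdges (sumGraph G K) = numEdges G + numEdges K := by
  rw [numEdges, edgeSet_sum,
    Set.ncard_union_eq (disjoint_map_inl_inr _ _) (Set.toFinite _) (Set.toFinite _),
    Set.ncard_image_of_injective _ (Sym2.map.injective inl_injective),
    Set.ncard_image_of_injective _ (Sym2.map.injective inr_injective)]
  rfl

lemma numTris_sum [Fintype α] [Fintype β] :
    numTris (sumGraph G K) = numTris G + numTris K := by
  have hset : {t : Finset (α ⊕ β) | IsTriangle (sumGraph G K) t} =
      (Finset.image inl '' {s | IsTriangle G s}) ∪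
      (Finset.image inr '' {s | IsTriangle K s}) := by
    ext t
    rw [Set.mem_setOf_eq, isTriangle_sum_iff]
    constructor
    · rintro (⟨s, hs, rfl⟩ | ⟨s, hs, rfl⟩)
      · exact Set.mem_union_left _ ⟨s, hs, rfl⟩
      · exact Set.mem_union_right _ ⟨s, hs, rfl⟩
    · rintro (⟨s, hs, rfl⟩ | ⟨s, hs, rfl⟩)
      · exact Or.inl ⟨s, hs, rfl⟩
      · exact Or.inr ⟨s, hs, rfl⟩
  have hdisj : Disjoint (Finset.image (inl : α → α ⊕ β) '' {s | IsTriangle G s})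
      (Finset.image (inr : β → α ⊕ β) '' {s | IsTriangle K s}) := by
    rw [Set.disjoint_left]
    rintro t ⟨s₁, hs₁, rfl⟩ ⟨s₂, hs₂, heq⟩
    have hne : s₁.Nonempty := Finset.card_pos.1 (by rw [hs₁.1]; norm_num)
    obtain ⟨a, ha⟩ := hne
    have : inl a ∈ Finset.image inr s₂ := heq ▸ mem_image_of_mem _ ha
    obtain ⟨b, -, hb⟩ := mem_image.1 this
    cases hb
  rw [numTris, hset,
    Set.ncard_union_eq hdisj (Set.toFinite _) (Set.toFinite _),
    Set.ncard_image_of_injective _ (Finset.image_injective inl_injective),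
    Set.ncard_image_of_injective _ (Finset.image_injective inr_injective)]
  rfl

lemma tauT_le_card {C : Finset (Sym2 α)} (hC : IsTriangleCover G C) : tauT G ≤ C.card :=
  Nat.sInf_le ⟨C, hC, rfl⟩

lemma exists_cover_tauT [Fintype α] :
    ∃ C : Finset (Sym2 α), IsTriangleCover G C ∧ C.card = tauT G := by
  have hcov : IsTriangleCover G (Set.toFinite G.edgeSet).toFinset := by
    constructor
    · intro e he; simpa using he
    · intro t ht
      obtain ⟨x, hx, y, hy, hne⟩ := Finset.one_lt_card.1 (by rw [ht.1]; norm_num : 1 < t.card)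
      exact ⟨s(x, y), mem_triEdges.2 ⟨x, hx, y, hy, hne, rfl⟩, by
        simp [SimpleGraph.mem_edgeSet, ht.2 x hx y hy hne]⟩
  have hne : {n | ∃ C : Finset (Sym2 α), IsTriangleCover G C ∧ C.card = n}.Nonempty :=
    ⟨_, _, hcov, rfl⟩
  exact Nat.sInf_mem hne

lemma bddAbove_packing [Fintype α] (G : SimpleGraph α) :
    BddAbove {n | ∃ P : Finset (Finset α), IsTrianglePacking G P ∧ P.card = n} := by
  refine ⟨Fintype.card (Finset α), fun m hm => ?_⟩
  obtain ⟨P, -, rfl⟩ := hm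
  exact P.card_le_univ

lemma card_le_nuT [Fintype α] {P : Finset (Finset α)} (hP : IsTrianglePacking G P) :
    P.card ≤ nuT G :=
  le_csSup (bddAbove_packing G) ⟨P, hP, rfl⟩

lemma exists_packing_nuT [Fintype α] :
    ∃ P : Finset (Finset α), IsTrianglePacking G P ∧ P.card = nuT G :=
by
  have hne : {n | ∃ P : Finset (Finset α), IsTrianglePacking G P ∧ P.card = n}.Nonempty :=
    ⟨0, ∅, ⟨fun t ht => absurd ht (by simp), fun t₁ h => absurd h (by simp)⟩, rfl⟩
  exact Nat.sSup_mem hne (bddAbove_packing G)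

lemma tauT_sum_ge [Fintype α] [Fintype β] : tauT G + tauT K ≤ tauT (sumGraph G K) := by
  classical
  obtain ⟨C, hC, hcard⟩ := exists_cover_tauT (G := sumGraph G K)
  set C₁ := C.preimage (Sym2.map (inl : α → α ⊕ β))
    ((Sym2.map.injective inl_injective).injOn) with hC₁
  set C₂ := C.preimage (Sym2.map (inr : β → α ⊕ β))
    ((Sym2.map.injective inr_injective).injOn) with hC₂
  have hcov₁ : IsTriangleCover G C₁ := by
    constructor
    · intro e he
      exact mem_edgeSet_of_map_inl (hC.1 _ (Finset.mem_preimage.1 he))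
    · intro t ht
      obtain ⟨e, he, heC⟩ := hC.2 _ (isTriangle_image_inl (K := K) ht)
      rw [triEdges_image _ inl_injective] at he
      obtain ⟨e', he', rfl⟩ := mem_image.1 he
      exact ⟨e', he', Finset.mem_preimage.2 heC⟩
  have hcov₂ : IsTriangleCover K C₂ := by
    constructor
    · intro e he
      exact mem_edgeSet_of_map_inr (hC.1 _ (Finset.mem_preimage.1 he))
    · intro t ht
      obtain ⟨e, he, heC⟩ := hC.2 _ (isTriangle_image_inr (G := G) ht)
      rw [triEdges_image _ inr_injective] at he
      obtain ⟨e', he', rfl⟩ := mem_image.1 he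
      exact ⟨e', he', Finset.mem_preimage.2 heC⟩
  have hsub : C₁.image (Sym2.map inl) ∪ C₂.image (Sym2.map inr) ⊆ C := by
    intro e he
    rcases Finset.mem_union.1 he with h | h
    · obtain ⟨e', he', rfl⟩ := mem_image.1 h
      exact Finset.mem_preimage.1 he'
    · obtain ⟨e', he', rfl⟩ := mem_image.1 h
      exact Finset.mem_preimage.1 he'
  have hdisj : Disjoint (C₁.image (Sym2.map (inl : α → α ⊕ β)))
      (C₂.image (Sym2.map (inr : β → α ⊕ β))) := by
    rw [Finset.disjoint_left]
    rintro e h₁ h₂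
    obtain ⟨e₁, -, rfl⟩ := mem_image.1 h₁
    obtain ⟨e₂, -, heq⟩ := mem_image.1 h₂
    exact sym2_map_inl_ne_inr e₁ e₂ heq.symm
  have hcards : C₁.card + C₂.card ≤ C.card := by
    calc C₁.card + C₂.card
        = (C₁.image (Sym2.map (inl : α → α ⊕ β))).card
          + (C₂.image (Sym2.map (inr : β → α ⊕ β))).card := by
          rw [Finset.card_image_of_injective _ (Sym2.map.injective inl_injective),
            Finset.card_image_of_injective _ (Sym2.map.injective inr_injective)]
      _ = (C₁.image (Sym2.map (inl : α → α ⊕ β))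
          ∪ C₂.image (Sym2.map (inr : β → α ⊕ β))).card :=
          (Finset.card_union_of_disjoint hdisj).symm
      _ ≤ C.card := Finset.card_le_card hsub
  calc tauT G + tauT K ≤ C₁.card + C₂.card :=
        Nat.add_le_add (tauT_le_card hcov₁) (tauT_le_card hcov₂)
    _ ≤ C.card := hcards
    _ = tauT (sumGraph G K) := hcard

lemma nuT_sum_le [Fintype α] [Fintype β] : nuT (sumGraph G K) ≤ nuT G + nuT K := by
  classical
  obtain ⟨P, hP, hcard⟩ := exists_packing_nuT (G := sumGraph G K)
  set P₁ := P.preimage (Finset.image (inl : α → α ⊕ β))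
    ((Finset.image_injective inl_injective).injOn) with hP₁
  set P₂ := P.preimage (Finset.image (inr : β → α ⊕ β))
    ((Finset.image_injective inr_injective).injOn) with hP₂
  have htri₁ : ∀ s ∈ P₁, IsTriangle G s := by
    intro s hs
    have hmem := Finset.mem_preimage.1 hs
    rcases isTriangle_sum_iff.1 (hP.1 _ hmem) with ⟨s', hs', heq⟩ | ⟨s', hs', heq⟩
    · rwa [Finset.image_injective inl_injective heq]
    · exfalso
      have hne : s'.Nonempty := Finset.card_pos.1 (by rw [hs'.1]; norm_num)
      obtain ⟨b, hb⟩ := hne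
      have : inr b ∈ Finset.image inl s := heq ▸ mem_image_of_mem _ hb
      obtain ⟨a, -, ha⟩ := mem_image.1 this
      cases ha
  have htri₂ : ∀ s ∈ P₂, IsTriangle K s := by
    intro s hs
    have hmem := Finset.mem_preimage.1 hs
    rcases isTriangle_sum_iff.1 (hP.1 _ hmem) with ⟨s', hs', heq⟩ | ⟨s', hs', heq⟩
    · exfalso
      have hne : s'.Nonempty := Finset.card_pos.1 (by rw [hs'.1]; norm_num)
      obtain ⟨a, ha⟩ := hne
      have : inl a ∈ Finset.image inr s := heq ▸ mem_image_of_mem _ ha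
      obtain ⟨b, -, hb⟩ := mem_image.1 this
      cases hb
    · rwa [Finset.image_injective inr_injective heq]
  have hpack₁ : IsTrianglePacking G P₁ := by
    refine ⟨htri₁, fun t₁ h₁ t₂ h₂ hne => ?_⟩
    have hd := hP.2 _ (Finset.mem_preimage.1 h₁) _ (Finset.mem_preimage.1 h₂)
      (fun he => hne (Finset.image_injective inl_injective he))
    rw [Finset.disjoint_left]
    intro e he₁ he₂
    rw [Finset.disjoint_left] at hd
    exact hd (by rw [triEdges_image _ inl_injective]; exact mem_image_of_mem _ he₁)
      (by rw [triEdges_image _ inl_injective]; exact mem_image_of_mem _ he₂)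
  have hpack₂ : IsTrianglePacking K P₂ := by
    refine ⟨htri₂, fun t₁ h₁ t₂ h₂ hne => ?_⟩
    have hd := hP.2 _ (Finset.mem_preimage.1 h₁) _ (Finset.mem_preimage.1 h₂)
      (fun he => hne (Finset.image_injective inr_injective he))
    rw [Finset.disjoint_left]
    intro e he₁ he₂
    rw [Finset.disjoint_left] at hd
    exact hd (by rw [triEdges_image _ inr_injective]; exact mem_image_of_mem _ he₁)
      (by rw [triEdges_image _ inr_injective]; exact mem_image_of_mem _ he₂)
  have hsub : P ⊆ P₁.image (Finset.image inl) ∪ P₂.image (Finset.image inr) := by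
    intro t ht
    rcases isTriangle_sum_iff.1 (hP.1 _ ht) with ⟨s, -, rfl⟩ | ⟨s, -, rfl⟩
    · exact Finset.mem_union_left _
        (mem_image_of_mem _ (Finset.mem_preimage.2 ht))
    · exact Finset.mem_union_right _
        (mem_image_of_mem _ (Finset.mem_preimage.2 ht))
  calc nuT (sumGraph G K) = P.card := hcard.symm
    _ ≤ (P₁.image (Finset.image inl) ∪ P₂.image (Finset.image inr)).card :=
        Finset.card_le_card hsub
    _ ≤ (P₁.image (Finset.image (inl : α → α ⊕ β))).card
        + (P₂.image (Finset.image (inr : β → α ⊕ β))).card := Finset.card_union_le _ _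
    _ = P₁.card + P₂.card := by
        rw [Finset.card_image_of_injective _ (Finset.image_injective inl_injective),
          Finset.card_image_of_injective _ (Finset.image_injective inr_injective)]
    _ ≤ nuT G + nuT K := Nat.add_le_add (card_le_nuT hpack₁) (card_le_nuT hpack₂)

lemma irreducible_sum (hG : Irreducible' G) (hK : Irreducible' K) :
    Irreducible' (sumGraph G K) := by
  intro e he
  rw [edgeSet_sum] at he
  rcases he with ⟨e', he', rfl⟩ | ⟨e', he', rfl⟩
  · obtain ⟨t, ht, het⟩ := hG e' he'
    exact ⟨t.image inl, isTriangle_image_inl ht, by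
      rw [triEdges_image _ inl_injective]; exact mem_image_of_mem _ het⟩
  · obtain ⟨t, ht, het⟩ := hK e' he'
    exact ⟨t.image inr, isTriangle_image_inr ht, by
      rw [triEdges_image _ inr_injective]; exact mem_image_of_mem _ het⟩

end Aux

section K4

variable {ι : Type*} [Fintype ι] [DecidableEq ι]

def kGraph (ι : Type*) : SimpleGraph (ι × Fin 4) where
  Adj p q := p.1 = q.1 ∧ p.2 ≠ q.2
  symm := ⟨by rintro p q ⟨h1, h2⟩; exact ⟨h1.symm, h2.symm⟩⟩
  loopless := ⟨by rintro p ⟨h1, h2⟩; exact h2 rfl⟩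

lemma isTriangle_kGraph_of {i : ι} {t : Finset (ι × Fin 4)} (hcard : t.card = 3)
    (hfib : ∀ x ∈ t, x.1 = i) : IsTriangle (kGraph ι) t :=
  ⟨hcard, fun x hx y hy hne =>
    ⟨(hfib x hx).trans (hfib y hy).symm, fun h2 =>
      hne (Prod.ext ((hfib x hx).trans (hfib y hy).symm) h2)⟩⟩

lemma exists_fiber_of_triangle {t : Finset (ι × Fin 4)} (ht : IsTriangle (kGraph ι) t) :
    ∃ i, ∀ x ∈ t, x.1 = i := by
  have hne : t.Nonempty := Finset.card_pos.1 (by rw [ht.1]; norm_num)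
  obtain ⟨x₀, hx₀⟩ := hne
  refine ⟨x₀.1, fun x hx => ?_⟩
  by_cases hxe : x = x₀
  · rw [hxe]
  · exact (ht.2 x hx x₀ hx₀ hxe).1

lemma card_three_image {i : ι} {u : Finset (Fin 4)} (hu : u.card = 3) :
    ((u.image fun j => ((i, j) : ι × Fin 4))).card = 3 := by
  rw [Finset.card_image_of_injective _ (fun a b hab => by
    simpa using congrArg Prod.snd hab)]
  exact hu

lemma mem_fiber_image {i : ι} {u : Finset (Fin 4)} {x : ι × Fin 4}
    (hx : x ∈ u.image fun j => ((i, j) : ι × Fin 4)) : x.1 = i := by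
  obtain ⟨j, -, rfl⟩ := Finset.mem_image.1 hx
  rfl

lemma exists_two_not_mem (a b : Fin 4) :
    ∃ c d : Fin 4, c ≠ d ∧ c ≠ a ∧ c ≠ b ∧ d ≠ a ∧ d ≠ b := by
  revert a b; decide

lemma kGraph_irreducible : Irreducible' (kGraph ι) := by
  intro e he
  induction e using Sym2.ind with
  | _ x y =>
    rw [SimpleGraph.mem_edgeSet] at he
    obtain ⟨h1, h2⟩ := he
    obtain ⟨i, a⟩ := x
    obtain ⟨j, b⟩ := y
    obtain rfl : i = j := h1
    have hab : a ≠ b := h2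
    obtain ⟨c, d, hcd, hca, hcb, -, -⟩ := exists_two_not_mem a b
    refine ⟨({a, b, c} : Finset (Fin 4)).image (fun j => (i, j)), ?_, ?_⟩
    · refine isTriangle_kGraph_of (card_three_image ?_) (fun x hx => mem_fiber_image hx)
      rw [Finset.card_insert_of_notMem (by simp [hab, hca.symm]),
        Finset.card_insert_of_notMem (by simp [hcb.symm]), Finset.card_singleton]
    · refine mem_triEdges.2 ⟨(i, a), ?_, (i, b), ?_, ?_, rfl⟩
      · exact Finset.mem_image_of_mem _ (by simp)
      · exact Finset.mem_image_of_mem _ (by simp)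
      · simp [hab]

lemma numEdges_kGraph : 6 * Fintype.card ι ≤ numEdges (kGraph ι) := by
  classical
  have hcard : ((Finset.univ : Finset ι) ×ˢ (⊤ : SimpleGraph (Fin 4)).edgeFinset).card
      = Fintype.card ι * 6 := by
    rw [Finset.card_product, Finset.card_univ,
      show ((⊤ : SimpleGraph (Fin 4)).edgeFinset).card = 6 from by decide]
  have h := Set.ncard_le_ncard_of_injOn
    (fun p : ι × Sym2 (Fin 4) => Sym2.map (fun j => ((p.1, j) : ι × Fin 4)) p.2)
    (s := ↑((Finset.univ : Finset ι) ×ˢ (⊤ : SimpleGraph (Fin 4)).edgeFinset))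
    (t := (kGraph ι).edgeSet) ?_ ?_ (Set.toFinite _)
  · rwa [Set.ncard_coe_finset, hcard, Nat.mul_comm] at h
  · rintro ⟨i, e⟩ hp
    simp only [Finset.coe_product, Set.mem_prod, Finset.mem_coe,
      SimpleGraph.mem_edgeFinset] at hp
    induction e using Sym2.ind with
    | _ a b =>
      have hab : a ≠ b := hp.2
      exact ⟨rfl, hab⟩
  · rintro ⟨i, e⟩ - ⟨i', e'⟩ - heq
    induction e using Sym2.ind with
    | _ a b =>
      induction e' using Sym2.ind with
      | _ a' b' =>
        simp only [Sym2.map_pair_eq, Sym2.eq_iff, Prod.mk.injEq] at heq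
        rcases heq with ⟨⟨hi, ha⟩, hj, hb⟩ | ⟨⟨hi, ha⟩, hj, hb⟩
        · simp [hi, ha, hb]
        · simp [hi, ha, hb, Sym2.eq_swap]

lemma numTris_kGraph : numTris (kGraph ι) ≤ 4 * Fintype.card ι := by
  classical
  set tgt := ((Finset.univ.image fun i => ({i} : Finset ι)) ×ˢ
    Finset.powersetCard 3 (Finset.univ : Finset (Fin 4))) with htgt
  have hcard : tgt.card = Fintype.card ι * 4 := by
    rw [htgt, Finset.card_product,
      Finset.card_image_of_injective _ Finset.singleton_injective,
      Finset.card_univ, Finset.card_powersetCard, Finset.card_univ]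
    congr 1
  have h := Set.ncard_le_ncard_of_injOn
    (fun t : Finset (ι × Fin 4) => (t.image Prod.fst, t.image Prod.snd))
    (s := {t | IsTriangle (kGraph ι) t}) (t := ↑tgt) ?_ ?_ (Set.toFinite _)
  · rwa [Set.ncard_coe_finset, hcard, Nat.mul_comm] at h
  · intro t ht
    obtain ⟨i, hi⟩ := exists_fiber_of_triangle ht
    have hne : t.Nonempty := Finset.card_pos.1 (by rw [ht.1]; norm_num)
    have hfst : t.image Prod.fst = {i} := by
      apply Finset.Subset.antisymm
      · intro x hx
        obtain ⟨y, hy, rfl⟩ := Finset.mem_image.1 hx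
        simp [hi y hy]
      · intro x hx
        obtain ⟨y, hy⟩ := hne
        rw [Finset.mem_singleton] at hx
        exact Finset.mem_image.2 ⟨y, hy, by rw [hi y hy, hx]⟩
    have hsnd : (t.image Prod.snd).card = 3 := by
      rw [Finset.card_image_of_injOn, ht.1]
      intro x hx y hy hxy
      exact Prod.ext ((hi x hx).trans (hi y hy).symm) hxy
    refine Finset.mem_coe.2 (Finset.mem_product.2 ⟨?_, ?_⟩)
    · exact Finset.mem_image.2 ⟨i, Finset.mem_univ i, hfst.symm⟩
    · exact Finset.mem_powersetCard.2 ⟨Finset.subset_univ _, hsnd⟩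
  · intro t₁ h₁ t₂ h₂ heq
    obtain ⟨i₁, hi₁⟩ := exists_fiber_of_triangle h₁
    obtain ⟨i₂, hi₂⟩ := exists_fiber_of_triangle h₂
    have hne₁ : t₁.Nonempty := Finset.card_pos.1 (by rw [h₁.1]; norm_num)
    have hne₂ : t₂.Nonempty := Finset.card_pos.1 (by rw [h₂.1]; norm_num)
    have hfst : t₁.image Prod.fst = t₂.image Prod.fst := congrArg Prod.fst heq
    have hsnd : t₁.image Prod.snd = t₂.image Prod.snd := congrArg Prod.snd heq
    have hii : i₁ = i₂ := by
      obtain ⟨x, hx⟩ := hne₁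
      have : x.1 ∈ t₂.image Prod.fst := hfst ▸ Finset.mem_image_of_mem _ hx
      obtain ⟨y, hy, hxy⟩ := Finset.mem_image.1 this
      rw [hi₁ x hx] at hxy
      rw [← hxy, hi₂ y hy]
    subst hii
    ext x
    constructor
    · intro hx
      have : x.2 ∈ t₂.image Prod.snd := hsnd ▸ Finset.mem_image_of_mem _ hx
      obtain ⟨y, hy, hxy⟩ := Finset.mem_image.1 this
      have : y = x := Prod.ext ((hi₂ y hy).trans (hi₁ x hx).symm) hxy
      rwa [← this]
    · intro hx
      have : x.2 ∈ t₁.image Prod.snd := hsnd ▸ Finset.mem_image_of_mem _ hx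
      obtain ⟨y, hy, hxy⟩ := Finset.mem_image.1 this
      have : y = x := Prod.ext ((hi₁ y hy).trans (hi₂ x hx).symm) hxy
      rwa [← this]

lemma triEdges_fiber {i : ι} {t : Finset (ι × Fin 4)} (hi : ∀ x ∈ t, x.1 = i)
    {e : Sym2 (ι × Fin 4)} (he : e ∈ triEdges t) : ∀ x ∈ e, x.1 = i := by
  obtain ⟨x, hx, y, hy, -, rfl⟩ := mem_triEdges.1 he
  intro z hz
  rcases Sym2.mem_iff.1 hz with rfl | rfl
  · exact hi _ hx
  · exact hi _ hy

lemma tauT_kGraph : 2 * Fintype.card ι ≤ tauT (kGraph ι) := by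
  classical
  obtain ⟨C, hC, hcard⟩ := exists_cover_tauT (G := kGraph ι)
  set Ci := fun i : ι => C.filter (fun e => ∀ x ∈ e, x.1 = i) with hCi
  have htwo : ∀ i : ι, 2 ≤ (Ci i).card := by
    intro i
    -- first triangle
    have ht₀ : IsTriangle (kGraph ι) (({0, 1, 2} : Finset (Fin 4)).image (fun j => (i, j))) :=
      isTriangle_kGraph_of (card_three_image (by decide)) (fun x hx => mem_fiber_image hx)
    obtain ⟨e₁, he₁, he₁C⟩ := hC.2 _ ht₀
    obtain ⟨x, hx, y, hy, hxy, rfl⟩ := mem_triEdges.1 he₁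
    obtain ⟨a, -, rfl⟩ := Finset.mem_image.1 hx
    obtain ⟨b, -, rfl⟩ := Finset.mem_image.1 hy
    have hab : a ≠ b := fun hh => hxy (by rw [hh])
    obtain ⟨c, d, hcd, hca, hcb, hda, hdb⟩ := exists_two_not_mem a b
    have ht₁ : IsTriangle (kGraph ι) (({a, c, d} : Finset (Fin 4)).image (fun j => (i, j))) := by
      refine isTriangle_kGraph_of (card_three_image ?_) (fun x hx => mem_fiber_image hx)
      rw [Finset.card_insert_of_notMem (by simp [hca.symm, hda.symm]),
        Finset.card_insert_of_notMem (by simp [hcd]), Finset.card_singleton]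
    obtain ⟨e₂, he₂, he₂C⟩ := hC.2 _ ht₁
    have he₁mem : s((i, a), (i, b)) ∈ Ci i := Finset.mem_filter.2
      ⟨he₁C, fun z hz => by
        rcases Sym2.mem_iff.1 hz with rfl | rfl <;> rfl⟩
    have he₂mem : e₂ ∈ Ci i := Finset.mem_filter.2
      ⟨he₂C, triEdges_fiber (fun x hx => mem_fiber_image hx) he₂⟩
    have hne : e₂ ≠ s((i, a), (i, b)) := by
      obtain ⟨u, hu, v, hv, huv, rfl⟩ := mem_triEdges.1 he₂
      obtain ⟨u', hu', rfl⟩ := Finset.mem_image.1 hu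
      obtain ⟨v', hv', rfl⟩ := Finset.mem_image.1 hv
      intro heq
      have hbmem : ((i, b) : ι × Fin 4) ∈ s((i, u'), (i, v')) := by
        rw [heq]; exact Sym2.mem_mk_right _ _
      have : b = u' ∨ b = v' := by
        rcases Sym2.mem_iff.1 hbmem with hh | hh
        · exact Or.inl (congrArg Prod.snd hh.symm).symm
        · exact Or.inr (congrArg Prod.snd hh.symm).symm
      have hu'' : u' ∈ ({a, c, d} : Finset (Fin 4)) := hu'
      have hv'' : v' ∈ ({a, c, d} : Finset (Fin 4)) := hv'
      simp only [Finset.mem_insert, Finset.mem_singleton] at hu'' hv''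
      rcases this with rfl | rfl
      · rcases hu'' with rfl | rfl | rfl
        · exact hab rfl
        · exact hcb rfl
        · exact hdb rfl
      · rcases hv'' with rfl | rfl | rfl
        · exact hab rfl
        · exact hcb rfl
        · exact hdb rfl
    calc 2 = ({e₂, s((i, a), (i, b))} : Finset (Sym2 (ι × Fin 4))).card :=
          (Finset.card_pair hne).symm
      _ ≤ (Ci i).card := Finset.card_le_card (by
          intro e he
          rcases Finset.mem_insert.1 he with rfl | he
          · exact he₂mem
          · rw [Finset.mem_singleton.1 he]; exact he₁mem)
  have hdisj : ∀ i ∈ Finset.univ, ∀ j ∈ Finset.univ, i ≠ j →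
      Disjoint (Ci i) (Ci j) := by
    intro i _ j _ hij
    rw [Finset.disjoint_left]
    intro e hei hej
    have h1 := (Finset.mem_filter.1 hei).2
    have h2 := (Finset.mem_filter.1 hej).2
    obtain ⟨x, hx⟩ : ∃ x, x ∈ e := by
      induction e using Sym2.ind with
      | _ x y => exact ⟨x, Sym2.mem_mk_left x y⟩
    exact hij ((h1 x hx).symm.trans (h2 x hx))
  calc 2 * Fintype.card ι = ∑ _i : ι, 2 := by
        rw [Finset.sum_const, Finset.card_univ, smul_eq_mul, Nat.mul_comm]
    _ ≤ ∑ i : ι, (Ci i).card := Finset.sum_le_sum (fun i _ => htwo i)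
    _ = (Finset.univ.biUnion Ci).card := (Finset.card_biUnion hdisj).symm
    _ ≤ C.card := Finset.card_le_card (by
        intro e he
        obtain ⟨i, -, hei⟩ := Finset.mem_biUnion.1 he
        exact (Finset.mem_filter.1 hei).1)
    _ = tauT (kGraph ι) := hcard

lemma nuT_kGraph : nuT (kGraph ι) ≤ Fintype.card ι := by
  classical
  obtain ⟨P, hP, hcard⟩ := exists_packing_nuT (G := kGraph ι)
  rw [← hcard]
  have := Finset.card_le_card_of_injOn (f := fun t : Finset (ι × Fin 4) => t.image Prod.fst)
    (s := P) (t := Finset.univ.image fun i => ({i} : Finset ι)) ?_ ?_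
  · rwa [Finset.card_image_of_injective _ Finset.singleton_injective,
      Finset.card_univ] at this
  · intro t ht
    obtain ⟨i, hi⟩ := exists_fiber_of_triangle (hP.1 t ht)
    have hne : t.Nonempty := Finset.card_pos.1 (by rw [(hP.1 t ht).1]; norm_num)
    refine Finset.mem_image.2 ⟨i, Finset.mem_univ i, ?_⟩
    apply Finset.Subset.antisymm
    · intro x hx
      obtain ⟨y, hy⟩ := hne
      rw [Finset.mem_singleton.1 hx]
      exact Finset.mem_image.2 ⟨y, hy, hi y hy⟩
    · intro x hx
      obtain ⟨y, hy, rfl⟩ := Finset.mem_image.1 hx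
      simp [hi y hy]
  · intro t₁ h₁ t₂ h₂ heq₀
    have heq : t₁.image Prod.fst = t₂.image Prod.fst := heq₀
    by_contra hne
    obtain ⟨i₁, hi₁⟩ := exists_fiber_of_triangle (hP.1 t₁ h₁)
    obtain ⟨i₂, hi₂⟩ := exists_fiber_of_triangle (hP.1 t₂ h₂)
    have hne₁ : t₁.Nonempty := Finset.card_pos.1 (by rw [(hP.1 t₁ h₁).1]; norm_num)
    have hii : i₁ = i₂ := by
      obtain ⟨x, hx⟩ := hne₁
      have : x.1 ∈ t₂.image Prod.fst := heq ▸ Finset.mem_image_of_mem _ hx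
      obtain ⟨y, hy, hxy⟩ := Finset.mem_image.1 this
      rw [hi₁ x hx] at hxy
      rw [← hxy, hi₂ y hy]
    subst hii
    -- both triangles lie in the 4-element fiber, so they share ≥ 2 vertices
    have hsub : t₁ ∪ t₂ ⊆ (Finset.univ : Finset (Fin 4)).image (fun j => (i₁, j)) := by
      intro x hx
      rcases Finset.mem_union.1 hx with hx | hx
      · exact Finset.mem_image.2 ⟨x.2, Finset.mem_univ _, by
          rw [← hi₁ x hx]⟩
      · exact Finset.mem_image.2 ⟨x.2, Finset.mem_univ _, by
          rw [← hi₂ x hx]⟩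
    have hcard4 : (t₁ ∪ t₂).card ≤ 4 := le_trans (Finset.card_le_card hsub)
      (le_trans (Finset.card_image_le) (by simp))
    have hinter : 2 ≤ (t₁ ∩ t₂).card := by
      have h36 := Finset.card_union_add_card_inter t₁ t₂
      rw [(hP.1 t₁ h₁).1, (hP.1 t₂ h₂).1] at h36
      omega
    obtain ⟨x, hx, y, hy, hxy⟩ := Finset.one_lt_card.1 (by omega : 1 < (t₁ ∩ t₂).card)
    have hd := hP.2 t₁ h₁ t₂ h₂ hne
    rw [Finset.disjoint_left] at hd
    exact hd
      (mem_triEdges.2 ⟨x, (Finset.mem_inter.1 hx).1, y, (Finset.mem_inter.1 hy).1, hxy, rfl⟩)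
      (mem_triEdges.2 ⟨x, (Finset.mem_inter.1 hx).2, y, (Finset.mem_inter.1 hy).2, hxy, rfl⟩)

end K4


universe u

/-- If for some δ > 0 Tuza's conjecture holds for every irreducible graph `G`
with |E| ≥ (3/2 − δ)·|T_G|, then it holds for every irreducible graph. -/
theorem tuza_of_three_halves {δ : ℝ} (hδ : 0 < δ)
    (h : ∀ (W : Type u) [Fintype W] [DecidableEq W] (G : SimpleGraph W),
      Irreducible' G → (numEdges G : ℝ) ≥ (3 / 2 - δ) * numTris G →
        tauT G ≤ 2 * nuT G) :
    ∀ (V : Type u) [Fintype V] [DecidableEq V] (G : SimpleGraph V),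
      Irreducible' G → tauT G ≤ 2 * nuT G := by
  intro V _ _ G hG
  obtain ⟨n, hn⟩ := exists_nat_ge
    (((3 / 2 - δ) * numTris G - numEdges G) / (4 * δ))
  set K := kGraph (Fin n) with hK
  set H := sumGraph G K with hH
  have hirr : Irreducible' H := irreducible_sum hG kGraph_irreducible
  have hEK : 6 * n ≤ numEdges K := by
    simpa using numEdges_kGraph (ι := Fin n)
  have hTK : numTris K ≤ 4 * n := by
    simpa using numTris_kGraph (ι := Fin n)
  have htauK : 2 * n ≤ tauT K := by
    simpa using tauT_kGraph (ι := Fin n)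
  have hnuK : nuT K ≤ n := by
    simpa using nuT_kGraph (ι := Fin n)
  have hEH : numEdges H = numEdges G + numEdges K := numEdges_sum
  have hTH : numTris H = numTris G + numTris K := numTris_sum
  have hratio : (numEdges H : ℝ) ≥ (3 / 2 - δ) * numTris H := by
    have h0T : (0 : ℝ) ≤ (numTris H : ℝ) := Nat.cast_nonneg _
    have h0E : (0 : ℝ) ≤ (numEdges H : ℝ) := Nat.cast_nonneg _
    rcases le_or_gt (3 / 2 - δ) 0 with hc | hc
    · nlinarith
    · have hTHle : (numTris H : ℝ) ≤ numTris G + 4 * n := by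
        rw [hTH]
        push_cast
        have : (numTris K : ℝ) ≤ 4 * n := by exact_mod_cast hTK
        linarith
      have hEHge : (numEdges G : ℝ) + 6 * n ≤ numEdges H := by
        rw [hEH]
        push_cast
        have : (6 * n : ℝ) ≤ numEdges K := by exact_mod_cast hEK
        linarith
      have hn' : (3 / 2 - δ) * numTris G - numEdges G ≤ 4 * δ * n := by
        rw [div_le_iff₀ (by linarith : (0 : ℝ) < 4 * δ)] at hn
        linarith
      have hmul : (3 / 2 - δ) * (numTris H : ℝ)
          ≤ (3 / 2 - δ) * ((numTris G : ℝ) + 4 * n) :=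
        mul_le_mul_of_nonneg_left hTHle hc.le
      have hexp : (3 / 2 - δ) * ((numTris G : ℝ) + 4 * n)
          = (3 / 2 - δ) * numTris G + 6 * n - 4 * δ * n := by ring
      linarith
  have happ : tauT H ≤ 2 * nuT H := h _ H hirr hratio
  have h1 : tauT G + 2 * n ≤ tauT H :=
    le_trans (Nat.add_le_add_left htauK _) tauT_sum_ge
  have h2 : nuT H ≤ nuT G + n :=
    le_trans nuT_sum_le (Nat.add_le_add_left hnuK _)
  omega
end

section
/- Let H be a linear 3-uniform hypergraph without isolated vertices, with vertex set V and edge set E. If |V| ≥ 2|E|, then τ(H) ≤ 2·ν(H), where τ is the minimum transversal size and ν is the maximum matching size. -/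
/-- A matching of the hypergraph with edge set `E`: a set of pairwise disjoint edges. -/
def IsHMatching {α : Type*} (E M : Finset (Finset α)) : Prop :=
  M ⊆ E ∧ ∀ e ∈ M, ∀ f ∈ M, e ≠ f → Disjoint e f

/-- The matching number ν of the hypergraph with edge set `E`. -/
noncomputable def hNu {α : Type*} (E : Finset (Finset α)) : ℕ :=
  sSup {n | ∃ M : Finset (Finset α), IsHMatching E M ∧ M.card = n}

/-- A transversal of the hypergraph with edge set `E`: a vertex set meeting every edge. -/
def IsHTransversal {α : Type*} (E : Finset (Finset α)) (T : Finset α) : Prop :=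
  ∀ e ∈ E, ∃ v ∈ e, v ∈ T

/-- The transversal number τ of the hypergraph with edge set `E`. -/
noncomputable def hTau {α : Type*} (E : Finset (Finset α)) : ℕ :=
  sInf {n | ∃ T : Finset α, IsHTransversal E T ∧ T.card = n}


section Aux
variable {α : Type*} [DecidableEq α]

lemma matching_bdd (E : Finset (Finset α)) :
    BddAbove {n | ∃ M : Finset (Finset α), IsHMatching E M ∧ M.card = n} :=
  ⟨E.card, fun n ⟨M, hM, hc⟩ => hc ▸ Finset.card_le_card hM.1⟩

lemma nu_spec (E : Finset (Finset α)) :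
    ∃ M : Finset (Finset α), IsHMatching E M ∧ M.card = hNu E := by
  have h0 : 0 ∈ {n | ∃ M : Finset (Finset α), IsHMatching E M ∧ M.card = n} :=
    ⟨∅, ⟨Finset.empty_subset _, by simp⟩, rfl⟩
  exact Nat.sSup_mem ⟨0, h0⟩ (matching_bdd E)

lemma le_nu {E M : Finset (Finset α)} (h : IsHMatching E M) : M.card ≤ hNu E :=
  le_csSup (matching_bdd E) ⟨M, h, rfl⟩

lemma tau_le {E : Finset (Finset α)} {T : Finset α} (h : IsHTransversal E T) :
    hTau E ≤ T.card := Nat.sInf_le ⟨T, h, rfl⟩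

lemma tau_spec {E : Finset (Finset α)} (h : ∀ e ∈ E, 0 < e.card) :
    ∃ T : Finset α, IsHTransversal E T ∧ T.card = hTau E := by
  have hne : {k | ∃ T : Finset α, IsHTransversal E T ∧ T.card = k}.Nonempty :=
    ⟨(E.biUnion id).card, E.biUnion id, fun f hf => by
      obtain ⟨v, hv⟩ := Finset.card_pos.mp (h f hf)
      exact ⟨v, hv, Finset.mem_biUnion.mpr ⟨f, hf, hv⟩⟩, rfl⟩
  exact Nat.sInf_mem hne

lemma key (n : ℕ) : ∀ E : Finset (Finset α), E.card ≤ n → (∀ e ∈ E, e.card = 3) →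
    hTau E + (E.biUnion id).card ≤ 2 * hNu E + 2 * E.card := by
  classical
  induction n with
  | zero =>
    intro E hE _
    have : E = ∅ := Finset.card_eq_zero.mp (Nat.le_zero.mp hE)
    subst this
    have h1 : hTau (∅ : Finset (Finset α)) ≤ 0 :=
      tau_le (T := ∅) (fun e he => absurd he (by simp))
    have h2 : (((∅ : Finset (Finset α))).biUnion id).card = 0 := by simp
    omega
  | succ n ih =>
    intro E hE h3
    rcases E.eq_empty_or_nonempty with rfl | ⟨e0, he0⟩
    · have h1 : hTau (∅ : Finset (Finset α)) ≤ 0 :=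
        tau_le (T := ∅) (fun e he => absurd he (by simp))
      have h2 : (((∅ : Finset (Finset α))).biUnion id).card = 0 := by simp
      omega
    by_cases hA : ∃ e ∈ E, ∃ a ∈ e, ∃ b ∈ e, a ≠ b ∧
        (∀ f ∈ E, a ∈ f → f = e) ∧ (∀ f ∈ E, b ∈ f → f = e)
    · -- Case A: an edge with two degree-one vertices
      obtain ⟨e, he, a, ha, b, hb, hab, hPa, hPb⟩ := hA
      -- get a third vertex c
      have hcard : ({a, b} : Finset α).card < e.card := by
        rw [h3 e he]
        have : ({a, b} : Finset α).card ≤ 2 := Finset.card_insert_le _ _ |>.trans (by simp)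
        omega
      obtain ⟨c, hce, hcab⟩ : ∃ c ∈ e, c ∉ ({a, b} : Finset α) := by
        by_contra hcon
        push_neg at hcon
        have := Finset.card_le_card (fun x hx => hcon x hx)
        omega
      have hca : c ≠ a := fun h => hcab (by simp [h])
      have hcb : c ≠ b := fun h => hcab (by simp [h])
      have habc3 : ({a, b, c} : Finset α).card = 3 :=
        Finset.card_eq_three.mpr ⟨a, b, c, hab, hca.symm, hcb.symm, rfl⟩
      have heabc : e = {a, b, c} := by
        refine (Finset.eq_of_subset_of_card_le ?_ ?_).symm
        · intro x hx
          simp only [Finset.mem_insert, Finset.mem_singleton] at hx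
          rcases hx with rfl | rfl | rfl <;> assumption
        · rw [h3 e he, habc3]
      set E' := E.filter (fun f => c ∉ f) with hE'def
      set Ec := E.filter (fun f => c ∈ f) with hEcdef
      have heEc : e ∈ Ec := Finset.mem_filter.mpr ⟨he, hce⟩
      have hEcne : 1 ≤ Ec.card := Finset.card_pos.mpr ⟨e, heEc⟩
      have hsplit : E'.card + Ec.card = E.card := by
        have hEc2 : Ec = E.filter (fun f => ¬ c ∉ f) := by
          ext f; simp [hEcdef]
        rw [hE'def, hEc2, Finset.card_filter_add_card_filter_not]
      have hE'subset : E' ⊆ E := Finset.filter_subset _ _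
      have hE'card : E'.card ≤ n := by
        have : E'.card < E.card := Finset.card_lt_card
          (Finset.ssubset_iff_of_subset hE'subset |>.mpr ⟨e, he, by simp [hE'def, hce]⟩)
        omega
      have h3' : ∀ f ∈ E', f.card = 3 := fun f hf => h3 f (hE'subset hf)
      have IH := ih E' hE'card h3'
      -- tau step
      have htauE : hTau E ≤ hTau E' + 1 := by
        obtain ⟨T', hT', hTc⟩ := tau_spec (E := E')
          (fun f hf => by rw [h3' f hf]; norm_num)
        have : IsHTransversal E (insert c T') := by
          intro f hf
          by_cases hcf : c ∈ f
          · exact ⟨c, hcf, Finset.mem_insert_self _ _⟩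
          · obtain ⟨v, hv, hvT⟩ := hT' f (Finset.mem_filter.mpr ⟨hf, hcf⟩)
            exact ⟨v, hv, Finset.mem_insert_of_mem hvT⟩
        calc hTau E ≤ (insert c T').card := tau_le this
          _ ≤ T'.card + 1 := Finset.card_insert_le _ _
          _ = hTau E' + 1 := by rw [hTc]
      -- nu step
      have hnuE : hNu E' + 1 ≤ hNu E := by
        obtain ⟨M', hM', hMc⟩ := nu_spec E'
        have heM' : e ∉ M' := fun h => by
          have := hM'.1 h
          rw [hE'def, Finset.mem_filter] at this
          exact this.2 hce
        have hdisj : ∀ g ∈ M', Disjoint e g := by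
          intro g hg
          have hgE' := hM'.1 hg
          have hgE : g ∈ E := hE'subset hgE'
          have hgc : c ∉ g := (Finset.mem_filter.mp hgE').2
          rw [Finset.disjoint_left]
          intro x hxe hxg
          rw [heabc] at hxe
          simp only [Finset.mem_insert, Finset.mem_singleton] at hxe
          rcases hxe with rfl | rfl | rfl
          · exact heM' (by rw [← hPa g hgE hxg]; exact hg)
          · exact heM' (by rw [← hPb g hgE hxg]; exact hg)
          · exact hgc hxg
        have : IsHMatching E (insert e M') := by
          constructor
          · exact Finset.insert_subset he (hM'.1.trans hE'subset)
          · intro f hf g hg hfg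
            rcases Finset.mem_insert.mp hf with rfl | hf' <;>
              rcases Finset.mem_insert.mp hg with rfl | hg'
            · exact absurd rfl hfg
            · exact hdisj g hg'
            · exact (hdisj f hf').symm
            · exact hM'.2 f hf' g hg' hfg
        have := le_nu this
        rw [Finset.card_insert_of_notMem heM'] at this
        omega
      -- vertex count step
      have hvert : (E.biUnion id).card ≤ (E'.biUnion id).card + (2 * Ec.card + 1) := by
        have hEsplit : E.biUnion id ⊆ E'.biUnion id ∪ insert c (Ec.biUnion (fun f => f.erase c)) := by
          intro v hv
          obtain ⟨f, hf, hvf⟩ := Finset.mem_biUnion.mp hv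
          by_cases hcf : c ∈ f
          · refine Finset.mem_union_right _ ?_
            by_cases hvc : v = c
            · simp [hvc]
            · exact Finset.mem_insert_of_mem (Finset.mem_biUnion.mpr
                ⟨f, Finset.mem_filter.mpr ⟨hf, hcf⟩, Finset.mem_erase.mpr ⟨hvc, hvf⟩⟩)
          · exact Finset.mem_union_left _ (Finset.mem_biUnion.mpr
              ⟨f, Finset.mem_filter.mpr ⟨hf, hcf⟩, hvf⟩)
        calc (E.biUnion id).card
            ≤ (E'.biUnion id ∪ insert c (Ec.biUnion (fun f => f.erase c))).card :=
              Finset.card_le_card hEsplit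
          _ ≤ (E'.biUnion id).card + (insert c (Ec.biUnion (fun f => f.erase c))).card :=
              Finset.card_union_le _ _
          _ ≤ (E'.biUnion id).card + ((Ec.biUnion (fun f => f.erase c)).card + 1) := by
              exact Nat.add_le_add_left (Finset.card_insert_le _ _) _
          _ ≤ (E'.biUnion id).card + (2 * Ec.card + 1) := by
              refine Nat.add_le_add_left (Nat.add_le_add_right ?_ 1) _
              calc (Ec.biUnion (fun f => f.erase c)).card
                  ≤ ∑ f ∈ Ec, (f.erase c).card := Finset.card_biUnion_le
                _ ≤ ∑ f ∈ Ec, 2 := by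
                    refine Finset.sum_le_sum fun f hf => ?_
                    have : f.card = 3 := h3 f (Finset.mem_filter.mp hf).1
                    have := Finset.card_erase_le (a := c) (s := f)
                    have h2 : (f.erase c).card = f.card - 1 :=
                      Finset.card_erase_of_mem (Finset.mem_filter.mp hf).2
                    omega
                _ = 2 * Ec.card := by rw [Finset.sum_const, smul_eq_mul, mul_comm]
      omega
    · -- Case B : every edge has at most one degree-one vertex
      push_neg at hA
      set e := e0 with hedef
      have he : e ∈ E := he0
      set E' := E.erase e with hE'def
      have hE'subset : E' ⊆ E := Finset.erase_subset _ _
      have hE'c1 : E'.card + 1 = E.card := by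
        rw [hE'def, Finset.card_erase_of_mem he]
        have := Finset.card_pos.mpr ⟨e, he⟩
        omega
      have hE'card : E'.card ≤ n := by omega
      have h3' : ∀ f ∈ E', f.card = 3 := fun f hf => h3 f (hE'subset hf)
      have IH := ih E' hE'card h3'
      have hcardE : E.card = E'.card + 1 := hE'c1.symm
      -- tau step
      obtain ⟨x, hxe⟩ := Finset.card_pos.mp (show 0 < e.card by rw [h3 e he]; norm_num)
      have htauE : hTau E ≤ hTau E' + 1 := by
        obtain ⟨T', hT', hTc⟩ := tau_spec (E := E')
          (fun f hf => by rw [h3' f hf]; norm_num)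
        have : IsHTransversal E (insert x T') := by
          intro f hf
          by_cases hfe : f = e
          · exact ⟨x, hfe ▸ hxe, Finset.mem_insert_self _ _⟩
          · obtain ⟨v, hv, hvT⟩ := hT' f (Finset.mem_erase.mpr ⟨hfe, hf⟩)
            exact ⟨v, hv, Finset.mem_insert_of_mem hvT⟩
        calc hTau E ≤ (insert x T').card := tau_le this
          _ ≤ T'.card + 1 := Finset.card_insert_le _ _
          _ = hTau E' + 1 := by rw [hTc]
      -- nu step
      have hnuE : hNu E' ≤ hNu E := by
        obtain ⟨M', hM', hMc⟩ := nu_spec E'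
        have : IsHMatching E M' := ⟨hM'.1.trans hE'subset, hM'.2⟩
        have := le_nu this
        omega
      -- vertex count
      have hvert : (E.biUnion id).card ≤ (E'.biUnion id).card + 1 := by
        set S := e.filter (fun v => ∀ f ∈ E, v ∈ f → f = e) with hSdef
        have hScard : S.card ≤ 1 := by
          rw [Finset.card_le_one]
          intro u hu v hv
          by_contra huv
          obtain ⟨hue, hPu⟩ := Finset.mem_filter.mp hu
          obtain ⟨hve, hPv⟩ := Finset.mem_filter.mp hv
          obtain ⟨g, hg, hvg, hge⟩ := hA e he u hue v hve huv hPu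
          exact hge (hPv g hg hvg)
        have hsub : E.biUnion id ⊆ E'.biUnion id ∪ S := by
          intro v hv
          obtain ⟨f, hf, hvf⟩ := Finset.mem_biUnion.mp hv
          by_cases hall : ∀ g ∈ E, v ∈ g → g = e
          · refine Finset.mem_union_right _ ?_
            have : f = e := hall f hf hvf
            exact Finset.mem_filter.mpr ⟨this ▸ hvf, hall⟩
          · push_neg at hall
            obtain ⟨g, hg, hvg, hge⟩ := hall
            exact Finset.mem_union_left _ (Finset.mem_biUnion.mpr
              ⟨g, Finset.mem_erase.mpr ⟨hge, hg⟩, hvg⟩)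
        calc (E.biUnion id).card ≤ (E'.biUnion id ∪ S).card := Finset.card_le_card hsub
          _ ≤ (E'.biUnion id).card + S.card := Finset.card_union_le _ _
          _ ≤ (E'.biUnion id).card + 1 := Nat.add_le_add_left hScard _
      omega

end Aux

/-- A linear 3-uniform hypergraph without isolated vertices and with
|V| ≥ 2|E| satisfies τ ≤ 2ν. -/
theorem hTau_le_two_hNu_of_many_vertices {α : Type*} [Fintype α] [DecidableEq α]
    (E : Finset (Finset α))
    (h3 : ∀ e ∈ E, e.card = 3)
    (hlin : ∀ e ∈ E, ∀ f ∈ E, e ≠ f → (e ∩ f).card ≤ 1)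
    (hiso : ∀ v : α, ∃ e ∈ E, v ∈ e)
    (h : Fintype.card α ≥ 2 * E.card) :
    hTau E ≤ 2 * hNu E := by
  have hk := key E.card E le_rfl h3
  have huniv : E.biUnion id = Finset.univ := by
    apply Finset.eq_univ_iff_forall.mpr
    intro v
    obtain ⟨e, he, hv⟩ := hiso v
    exact Finset.mem_biUnion.mpr ⟨e, he, hv⟩
  rw [huniv, Finset.card_univ] at hk
  omega
end

section
/- Let H be a linear 3-uniform hypergraph with edge set E. If ν(H) ≥ |E|/3, then τ(H) ≤ 2·ν(H). -/
lemma hTau_le {α : Type*} (E : Finset (Finset α)) (T : Finset α)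
    (hT : IsHTransversal E T) : hTau E ≤ T.card :=
  Nat.sInf_le ⟨T, hT, rfl⟩

lemma hNu_ge {α : Type*} (E M : Finset (Finset α))
    (hM : IsHMatching E M) : M.card ≤ hNu E := by
  apply le_csSup
  · exact ⟨E.card, fun n hn => by
      obtain ⟨N, hN, rfl⟩ := hn
      exact Finset.card_le_card hN.1⟩
  · exact ⟨M, hM, rfl⟩

lemma hNu_mono {α : Type*} (E E' : Finset (Finset α)) (h : E' ⊆ E) :
    hNu E' ≤ hNu E := by
  apply csSup_le
  · exact ⟨0, ∅, ⟨Finset.empty_subset _, fun e he => absurd he (Finset.notMem_empty e)⟩,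
      Finset.card_empty⟩
  · rintro n ⟨M, ⟨hME, hdisj⟩, rfl⟩
    exact hNu_ge E M ⟨hME.trans h, hdisj⟩

lemma exists_transversal_card {α : Type*} [DecidableEq α] (E : Finset (Finset α))
    (hne : ∀ e ∈ E, e.Nonempty) :
    ∃ T : Finset α, IsHTransversal E T ∧ T.card = hTau E := by
  have hnonempty : {n | ∃ T : Finset α, IsHTransversal E T ∧ T.card = n}.Nonempty := by
    refine ⟨(E.biUnion id).card, E.biUnion id, fun e he => ?_, rfl⟩
    obtain ⟨v, hv⟩ := hne e he
    exact ⟨v, hv, Finset.mem_biUnion.mpr ⟨e, he, hv⟩⟩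
  exact Nat.sInf_mem hnonempty

lemma hTau_le_card {α : Type*} [DecidableEq α] :
    ∀ (n : ℕ) (E : Finset (Finset α)), E.card ≤ n → (∀ e ∈ E, e.Nonempty) →
      hTau E ≤ E.card := by
  intro n
  induction n with
  | zero =>
    intro E hE _
    have hE0 : E = ∅ := Finset.card_eq_zero.mp (Nat.le_zero.mp hE)
    subst hE0
    have := hTau_le (∅ : Finset (Finset α)) ∅
      (fun e he => absurd he (Finset.notMem_empty e))
    simpa using this
  | succ n ih =>
    intro E hE hne
    by_cases h0 : E = ∅
    · subst h0
      have := hTau_le (∅ : Finset (Finset α)) ∅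
        (fun e he => absurd he (Finset.notMem_empty e))
      simpa using this
    · obtain ⟨e, he⟩ := Finset.nonempty_iff_ne_empty.mpr h0
      obtain ⟨v, hv⟩ := hne e he
      set E' := E.filter (fun f => v ∉ f) with hE'def
      have hsub : E' ⊆ E := Finset.filter_subset _ _
      have heE' : e ∉ E' := by simp [hE'def, Finset.mem_filter, hv]
      have hlt : E'.card < E.card :=
        Finset.card_lt_card ⟨hsub, fun hx => heE' (hx he)⟩
      obtain ⟨T', hT', hTc⟩ := exists_transversal_card E' (fun g hg => hne g (hsub hg))
      have htrans : IsHTransversal E (insert v T') := by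
        intro g hg
        by_cases hvg : v ∈ g
        · exact ⟨v, hvg, Finset.mem_insert_self _ _⟩
        · obtain ⟨w, hw1, hw2⟩ := hT' g (Finset.mem_filter.mpr ⟨hg, hvg⟩)
          exact ⟨w, hw1, Finset.mem_insert_of_mem hw2⟩
      have h1 : hTau E ≤ T'.card + 1 :=
        le_trans (hTau_le E _ htrans) (Finset.card_insert_le _ _)
      have h2 : hTau E' ≤ E'.card := ih E' (by omega) (fun g hg => hne g (hsub hg))
      omega

lemma two_tau_le_nu_add_card {α : Type*} [DecidableEq α] :
    ∀ (n : ℕ) (E : Finset (Finset α)), E.card ≤ n → (∀ e ∈ E, e.Nonempty) →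
      2 * hTau E ≤ hNu E + E.card := by
  intro n
  induction n with
  | zero =>
    intro E hE _
    have hE0 : E = ∅ := Finset.card_eq_zero.mp (Nat.le_zero.mp hE)
    subst hE0
    have := hTau_le (∅ : Finset (Finset α)) ∅
      (fun e he => absurd he (Finset.notMem_empty e))
    simp at this
    omega
  | succ n ih =>
    intro E hE hne
    by_cases hover : ∃ v : α, ∃ e ∈ E, ∃ f ∈ E, e ≠ f ∧ v ∈ e ∧ v ∈ f
    · obtain ⟨v, e, he, f, hf, hef, hve, hvf⟩ := hover
      set E' := E.filter (fun g => v ∉ g) with hE'def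
      have hsub : E' ⊆ E := Finset.filter_subset _ _
      have heE' : e ∉ E' := by simp [hE'def, Finset.mem_filter, hve]
      have hfE' : f ∉ E' := by simp [hE'def, Finset.mem_filter, hvf]
      have hcard2 : E'.card + 2 ≤ E.card := by
        have hins : insert e (insert f E') ⊆ E := by
          intro x hx
          rcases Finset.mem_insert.mp hx with rfl | hx'
          · exact he
          · rcases Finset.mem_insert.mp hx' with rfl | hx''
            · exact hf
            · exact hsub hx''
        have hnotin : e ∉ insert f E' := by
          simp [Finset.mem_insert, hef, heE']
        have hc : (insert e (insert f E')).card = E'.card + 2 := by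
          rw [Finset.card_insert_of_notMem hnotin, Finset.card_insert_of_notMem hfE']
        calc E'.card + 2 = (insert e (insert f E')).card := hc.symm
          _ ≤ E.card := Finset.card_le_card hins
      obtain ⟨T', hT', hTc⟩ := exists_transversal_card E' (fun g hg => hne g (hsub hg))
      have htrans : IsHTransversal E (insert v T') := by
        intro g hg
        by_cases hvg : v ∈ g
        · exact ⟨v, hvg, Finset.mem_insert_self _ _⟩
        · obtain ⟨w, hw1, hw2⟩ := hT' g (Finset.mem_filter.mpr ⟨hg, hvg⟩)
          exact ⟨w, hw1, Finset.mem_insert_of_mem hw2⟩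
      have h1 : hTau E ≤ hTau E' + 1 := by
        have := le_trans (hTau_le E _ htrans) (Finset.card_insert_le _ _)
        omega
      have h2 : 2 * hTau E' ≤ hNu E' + E'.card :=
        ih E' (by omega) (fun g hg => hne g (hsub hg))
      have h3 : hNu E' ≤ hNu E := hNu_mono E E' hsub
      omega
    · push_neg at hover
      have hmatch : IsHMatching E E := by
        refine ⟨subset_rfl, fun e he f hf hef => ?_⟩
        rw [Finset.disjoint_left]
        intro v hv hv'
        exact hover v e he f hf hef hv hv'
      have h1 : E.card ≤ hNu E := hNu_ge E E hmatch
      have h2 : hTau E ≤ E.card := hTau_le_card (n + 1) E hE hne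
      omega

/-- A linear 3-uniform hypergraph with ν ≥ |E|/3 satisfies τ ≤ 2ν. -/
theorem hTau_le_two_hNu_of_nu_ge_third {α : Type*} [DecidableEq α]
    (E : Finset (Finset α))
    (h3 : ∀ e ∈ E, e.card = 3)
    (hlin : ∀ e ∈ E, ∀ f ∈ E, e ≠ f → (e ∩ f).card ≤ 1)
    (h : (hNu E : ℝ) ≥ (E.card : ℝ) / 3) :
    hTau E ≤ 2 * hNu E := by
  have hne : ∀ e ∈ E, e.Nonempty := by
    intro e he
    have := h3 e he
    rw [← Finset.card_pos, this]
    omega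
  have hmain : 2 * hTau E ≤ hNu E + E.card :=
    two_tau_le_nu_add_card E.card E le_rfl hne
  have hcast : (E.card : ℝ) ≤ 3 * (hNu E : ℝ) := by linarith
  have hEcard : E.card ≤ 3 * hNu E := by exact_mod_cast hcast
  omega
end
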